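/- With D the elliptical region b²x² + a²y² < a²b², a = cosh c, b = sinh c, c > 0, and ρ = (a+b)², the Chebyshev polynomial of the second kind U_n satisfies ∬_D |U_n(z)|² dx dy = (π/(4(n+1))) (ρ^{n+1} - ρ^{-(n+1)}). -/

import Mathlib

open MeasureTheory Complex Real Polynomial

/-!
Elliptic coordinates `z = cosh w` map the strip `(0, c) × (0, 2π)` injectively onto the ellipse
minus a segment of the real axis, with real Jacobian `|sinh w|²`. Since
`Uₙ(cosh w) sinh w = sinh ((n + 1) w)`, the integral becomes
`∬ |sinh ((n + 1) w)|² = ∫₀ᶜ ∫₀^{2π} sinh² ((n + 1) x) + sin² ((n + 1) y) dy dx`,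
which equals `π sinh (2 (n + 1) c) / (2 (n + 1))`.
-/

open Set

namespace Complex

theorem cosh_re (w : ℂ) : (cosh w).re = Real.cosh w.re * Real.cos w.im := by
  obtain ⟨x, y, rfl⟩ : ∃ x y : ℝ, w = x + y * I := ⟨_, _, (re_add_im w).symm⟩
  simp [cosh_add, cosh_mul_I, sinh_mul_I, ← ofReal_cosh, ← ofReal_cos, ← ofReal_sinh,
    ← ofReal_sin]

theorem cosh_im (w : ℂ) : (cosh w).im = Real.sinh w.re * Real.sin w.im := by
  obtain ⟨x, y, rfl⟩ : ∃ x y : ℝ, w = x + y * I := ⟨_, _, (re_add_im w).symm⟩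
  simp [cosh_add, cosh_mul_I, sinh_mul_I, ← ofReal_cosh, ← ofReal_cos, ← ofReal_sinh,
    ← ofReal_sin]

theorem sinh_re (w : ℂ) : (sinh w).re = Real.sinh w.re * Real.cos w.im := by
  obtain ⟨x, y, rfl⟩ : ∃ x y : ℝ, w = x + y * I := ⟨_, _, (re_add_im w).symm⟩
  simp [sinh_add, cosh_mul_I, sinh_mul_I, ← ofReal_cosh, ← ofReal_cos, ← ofReal_sinh,
    ← ofReal_sin]

theorem sinh_im (w : ℂ) : (sinh w).im = Real.cosh w.re * Real.sin w.im := by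
  obtain ⟨x, y, rfl⟩ : ∃ x y : ℝ, w = x + y * I := ⟨_, _, (re_add_im w).symm⟩
  simp [sinh_add, cosh_mul_I, sinh_mul_I, ← ofReal_cosh, ← ofReal_cos, ← ofReal_sinh,
    ← ofReal_sin]

theorem normSq_sinh (w : ℂ) : normSq (sinh w) = Real.sinh w.re ^ 2 + Real.sin w.im ^ 2 := by
  rw [normSq_apply, sinh_re, sinh_im]
  linear_combination Real.sinh w.re ^ 2 * Real.sin_sq_add_cos_sq w.im
    + Real.sin w.im ^ 2 * Real.cosh_sq w.re

theorem exists_cosh_eq (z : ℂ) : ∃ w ∈ Ici 0 ×ℂ Ico 0 (2 * π), cosh w = z := by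
  obtain ⟨v, hv⟩ := cos_surjective z
  obtain ⟨u, hu, rfl⟩ : ∃ u : ℂ, 0 ≤ u.re ∧ cosh u = z := by
    rcases le_total 0 (v * I).re with h | h
    · exact ⟨v * I, h, by rw [cosh_mul_I, hv]⟩
    · exact ⟨-(v * I), by simpa using h, by rw [cosh_neg, cosh_mul_I, hv]⟩
  set k := toIcoDiv two_pi_pos 0 u.im
  refine ⟨u - k * (2 * π * I), ⟨?_, ?_⟩, cosh_periodic.sub_int_mul_eq k⟩
  · simpa using hu
  · have him : (u - k * (2 * π * I)).im = u.im - k * (2 * π) := by simp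
    rw [mem_preimage, him, ← zsmul_eq_mul, self_sub_toIcoDiv_zsmul]
    exact toIcoMod_mem_Ico' two_pi_pos u.im

theorem injOn_cosh : InjOn cosh (Ioi 0 ×ℂ Ico 0 (2 * π)) := by
  rintro w ⟨hw, hw'⟩ v ⟨hv, hv'⟩ h
  simp only [mem_preimage, mem_Ioi, mem_Ico] at hw hw' hv hv'
  rw [← cos_mul_I, ← cos_mul_I, cos_eq_cos_iff] at h
  obtain ⟨k, hk | hk⟩ := h
  · have hre : v.re = w.re := by simpa using congrArg im hk
    have him : -v.im = 2 * k * π + -w.im := by simpa using congrArg re hk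
    obtain rfl : k = 0 := by
      have hlt : (k : ℝ) < 1 := by nlinarith [pi_pos]
      have hgt : (-1 : ℝ) < k := by nlinarith [pi_pos]
      have : k < 1 := by exact_mod_cast hlt
      have : -1 < k := by exact_mod_cast hgt
      omega
    exact Complex.ext hre.symm (by simpa using him.symm)
  · have : v.re = -w.re := by simpa using congrArg im hk
    linarith

theorem volume_setOf_im_eq_zero : volume {z : ℂ | z.im = 0} = 0 := by
  have : {z : ℂ | z.im = 0} = LinearMap.ker imLm := by ext; simp
  rw [this]
  refine Measure.addHaar_submodule _ _ fun h => ?_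
  have : I ∈ LinearMap.ker imLm := h ▸ Submodule.mem_top
  simp at this

theorem det_restrictScalars_toSpanSingleton (a : ℂ) :
    ((ContinuousLinearMap.toSpanSingleton ℂ a).restrictScalars ℝ).det = normSq a := by
  have : ((ContinuousLinearMap.toSpanSingleton ℂ a).restrictScalars ℝ : ℂ →ₗ[ℝ] ℂ)
      = Algebra.lmul ℝ ℂ a := by
    ext z
    simp [mul_comm]
  rw [ContinuousLinearMap.det, this, ← Algebra.norm_apply, Algebra.norm_complex_apply]

variable {E : Type*} [NormedAddCommGroup E] [NormedSpace ℝ E]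

theorem setIntegral_image_eq_setIntegral_normSq_deriv_smul {f f' : ℂ → ℂ} {s : Set ℂ}
    (hs : MeasurableSet s) (hf' : ∀ w ∈ s, HasDerivWithinAt f (f' w) s w) (hf : InjOn f s)
    (g : ℂ → E) : ∫ z in f '' s, g z = ∫ w in s, normSq (f' w) • g (f w) := by
  rw [integral_image_eq_integral_abs_det_fderiv_smul volume hs
    (fun w hw => (hf' w hw).hasFDerivWithinAt.restrictScalars ℝ) hf]
  simp only [det_restrictScalars_toSpanSingleton, abs_of_nonneg (normSq_nonneg _)]

theorem setIntegral_reProdIm {f : ℂ → E} {s t : Set ℝ} (hf : IntegrableOn f (s ×ℂ t)) :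
    ∫ z in s ×ℂ t, f z = ∫ x in s, ∫ y in t, f (x + y * I) := by
  have hpre : s ×ℂ t = measurableEquivRealProd.symm '' (s ×ˢ t) := by
    rw [MeasurableEquiv.image_symm]; rfl
  have hmp := volume_preserving_equiv_real_prod.symm
  rw [hpre, hmp.setIntegral_image_emb measurableEquivRealProd.symm.measurableEmbedding,
    Measure.volume_eq_prod, setIntegral_prod]
  · simp only [measurableEquivRealProd_symm_apply, mk_eq_add_mul_I]
  · rw [← Measure.volume_eq_prod]
    exact (hmp.integrableOn_image measurableEquivRealProd.symm.measurableEmbedding).1 (hpre ▸ hf)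

end Complex

theorem integral_sin_natCast_mul_sq {m : ℕ} (hm : m ≠ 0) :
    ∫ y in (0 : ℝ)..2 * π, Real.sin (m * y) ^ 2 = π := by
  have hm' : (m : ℝ) ≠ 0 := Nat.cast_ne_zero.2 hm
  have hsin : Real.sin (m * (2 * π)) = 0 := by
    rw [← mul_assoc, mul_comm (m : ℝ) 2]
    exact_mod_cast Real.sin_nat_mul_pi (2 * m)
  rw [intervalIntegral.integral_comp_mul_left (fun y => Real.sin y ^ 2) hm', integral_sin_sq,
    hsin, mul_zero, Real.sin_zero, smul_eq_mul]
  field_simp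
  ring

theorem integral_cosh_mul {a : ℝ} (ha : a ≠ 0) (c : ℝ) :
    ∫ x in (0 : ℝ)..c, Real.cosh (a * x) = Real.sinh (a * c) / a := by
  rw [intervalIntegral.integral_comp_mul_left (fun x => Real.cosh x) ha,
    intervalIntegral.integral_eq_sub_of_hasDerivAt (fun x _ => Real.hasDerivAt_sinh x)
      (Real.continuous_cosh.intervalIntegrable _ _)]
  simp [div_eq_inv_mul]

theorem Real.sinh_natCast_mul (k : ℕ) (x : ℝ) :
    Real.sinh (k * x) =
      ((Real.cosh x + Real.sinh x) ^ k - ((Real.cosh x + Real.sinh x) ^ k)⁻¹) / 2 := by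
  rw [Real.cosh_add_sinh, ← Real.exp_nat_mul, ← Real.exp_neg, Real.sinh_eq]

theorem Complex.integral_normSq_sinh_natCast_mul {m : ℕ} (hm : m ≠ 0) {c : ℝ} (hc : 0 ≤ c) :
    ∫ w in Ioo 0 c ×ℂ Ioo 0 (2 * π), normSq (sinh (m * w)) =
      π * Real.sinh (2 * m * c) / (2 * m) := by
  have hint : IntegrableOn (fun w : ℂ => normSq (sinh (m * w))) (Ioo 0 c ×ℂ Ioo 0 (2 * π)) :=
    (ContinuousOn.integrableOn_compact (isCompact_Icc.reProdIm isCompact_Icc)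
      (by fun_prop)).mono_set
      (reProdIm_subset_iff.2 (prod_mono Ioo_subset_Icc_self Ioo_subset_Icc_self))
  have hinner (x : ℝ) :
      ∫ y in Ioo 0 (2 * π), normSq (sinh (m * (x + y * I))) = π * Real.cosh (2 * m * x) := by
    have hsq (y : ℝ) :
        normSq (sinh (m * (x + y * I))) = Real.sinh (m * x) ^ 2 + Real.sin (m * y) ^ 2 := by
      simp [normSq_sinh]
    simp only [hsq]
    rw [← integral_Ioc_eq_integral_Ioo, ← intervalIntegral.integral_of_le two_pi_pos.le,
      intervalIntegral.integral_add intervalIntegrable_const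
        ((by fun_prop : Continuous fun y : ℝ => Real.sin (m * y) ^ 2).intervalIntegrable _ _),
      intervalIntegral.integral_const, integral_sin_natCast_mul_sq hm, smul_eq_mul,
      mul_assoc, Real.cosh_two_mul, Real.cosh_sq]
    ring
  rw [setIntegral_reProdIm hint]
  simp only [hinner]
  rw [← integral_Ioc_eq_integral_Ioo, ← intervalIntegral.integral_of_le hc,
    intervalIntegral.integral_const_mul, integral_cosh_mul (by positivity), mul_div_assoc]

/-- The interior of the ellipse with foci `±1` and semi-axes `cosh c`, `sinh c`. -/
def ellipseInterior (c : ℝ) : Set ℂ :=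
  {z : ℂ | Real.sinh c ^ 2 * z.re ^ 2 + Real.cosh c ^ 2 * z.im ^ 2 <
    Real.cosh c ^ 2 * Real.sinh c ^ 2}

theorem cosh_mem_ellipseInterior_iff (c : ℝ) (w : ℂ) :
    Complex.cosh w ∈ ellipseInterior c ↔ Real.sinh w.re ^ 2 < Real.sinh c ^ 2 := by
  have key : Real.sinh c ^ 2 * (Complex.cosh w).re ^ 2
      + Real.cosh c ^ 2 * (Complex.cosh w).im ^ 2 - Real.cosh c ^ 2 * Real.sinh c ^ 2
      = (Real.sinh w.re ^ 2 - Real.sinh c ^ 2) * (Real.sinh c ^ 2 + Real.sin w.im ^ 2) := by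
    rw [Complex.cosh_re, Complex.cosh_im]
    linear_combination Real.sinh c ^ 2 * Real.cos w.im ^ 2 * Real.cosh_sq w.re
      + (Real.sinh w.re ^ 2 * Real.sin w.im ^ 2 - Real.sinh c ^ 2) * Real.cosh_sq c
      + Real.sinh c ^ 2 * (Real.sinh w.re ^ 2 + 1) * Real.sin_sq_add_cos_sq w.im
  rw [ellipseInterior, mem_ofPred_eq, ← sub_neg, key]
  constructor
  · exact fun h => sub_neg.1 (neg_of_mul_neg_left h (by positivity))
  · intro h
    have : 0 < Real.sinh c ^ 2 := (sq_nonneg _).trans_lt h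
    exact mul_neg_of_neg_of_pos (sub_neg.2 h) (by positivity)

theorem cosh_mem_ellipseInterior_iff_of_nonneg {c : ℝ} (hc : 0 ≤ c) {w : ℂ}
    (hw : 0 ≤ w.re) : Complex.cosh w ∈ ellipseInterior c ↔ w.re < c := by
  rw [cosh_mem_ellipseInterior_iff, sq_lt_sq₀ (Real.sinh_nonneg_iff.2 hw)
    (Real.sinh_nonneg_iff.2 hc), Real.sinh_lt_sinh]

theorem image_cosh_ae_eq_ellipseInterior {c : ℝ} (hc : 0 ≤ c) :
    Complex.cosh '' (Ioo 0 c ×ℂ Ioo 0 (2 * π)) =ᵐ[volume] ellipseInterior c := by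
  have himage : Complex.cosh '' (Ioo 0 c ×ℂ Ioo 0 (2 * π)) ⊆ ellipseInterior c := by
    rintro _ ⟨w, ⟨hre, -⟩, rfl⟩
    exact (cosh_mem_ellipseInterior_iff_of_nonneg hc hre.1.le).2 hre.2
  have hdiff : ellipseInterior c \ Complex.cosh '' (Ioo 0 c ×ℂ Ioo 0 (2 * π)) ⊆
      {z : ℂ | z.im = 0} := by
    rintro z ⟨hz, hz'⟩
    by_contra him
    obtain ⟨w, ⟨hre, him'⟩, rfl⟩ := Complex.exists_cosh_eq z
    have hre0 : w.re ≠ 0 := fun h => him (by simp [Complex.cosh_im, h])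
    have him0 : w.im ≠ 0 := fun h => him (by simp [Complex.cosh_im, h])
    refine hz' ⟨w, ⟨⟨hre.lt_of_ne' hre0, ?_⟩, him'.1.lt_of_ne' him0, him'.2⟩, rfl⟩
    exact (cosh_mem_ellipseInterior_iff_of_nonneg hc hre).1 hz
  rw [ae_eq_set, sdiff_eq_empty.2 himage]
  exact ⟨measure_empty, measure_mono_null hdiff Complex.volume_setOf_im_eq_zero⟩

/-- Norm of the Chebyshev polynomial of the second kind over the elliptical
region with semi-axes `a = cosh c`, `b = sinh c`:
`∬_D |Uₙ|² = (π/(4(n+1)))(ρ^{n+1} - ρ^{-(n+1)})` where `ρ = (a+b)²`. -/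
theorem chebyshevU_norm_ellipse (c : ℝ) (hc : 0 < c) (n : ℕ) :
    (∫ z in {z : ℂ | (Real.sinh c) ^ 2 * z.re ^ 2 + (Real.cosh c) ^ 2 * z.im ^ 2 <
        (Real.cosh c) ^ 2 * (Real.sinh c) ^ 2},
      ‖(Polynomial.Chebyshev.U ℂ n).eval z‖ ^ 2) =
      π / (4 * (n + 1)) *
        ((Real.cosh c + Real.sinh c) ^ (2 * (n + 1)) -
          ((Real.cosh c + Real.sinh c) ^ (2 * (n + 1)))⁻¹) := by
  have hS : MeasurableSet (Ioo 0 c ×ℂ Ioo 0 (2 * π)) :=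
    (measurable_re measurableSet_Ioo).inter (measurable_im measurableSet_Ioo)
  have hinj : InjOn Complex.cosh (Ioo 0 c ×ℂ Ioo 0 (2 * π)) :=
    Complex.injOn_cosh.mono
      (reProdIm_subset_iff.2 (prod_mono Ioo_subset_Ioi_self Ioo_subset_Ico_self))
  have hjac (w : ℂ) :
      normSq (Complex.sinh w) • ‖(Chebyshev.U ℂ n).eval (Complex.cosh w)‖ ^ 2 =
        normSq (Complex.sinh ((n + 1 : ℕ) * w)) := by
    rw [smul_eq_mul, normSq_eq_norm_sq, normSq_eq_norm_sq, ← mul_pow, ← norm_mul, mul_comm,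
      Chebyshev.U_complex_cosh]
    push_cast
    rfl
  have hexp : 2 * ((n + 1 : ℕ) : ℝ) * c = ((2 * (n + 1) : ℕ) : ℝ) * c := by push_cast; ring
  change ∫ z in ellipseInterior c, _ = _
  rw [← setIntegral_congr_set (image_cosh_ae_eq_ellipseInterior hc.le),
    Complex.setIntegral_image_eq_setIntegral_normSq_deriv_smul hS
      (fun w _ => (Complex.hasDerivAt_cosh w).hasDerivWithinAt) hinj]
  simp only [hjac]
  rw [Complex.integral_normSq_sinh_natCast_mul n.add_one_ne_zero hc.le, hexp,
    Real.sinh_natCast_mul]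
  push_cast
  field_simp
  ring
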